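/- Let X be a finite set of positive integers greater than 1 such that the bipartite divisor graph B(X) is a cycle of length n with n ≥ 6. Then both the prime graph Δ(X) (vertices ρ(X), edge pq iff pq divides some element of X) and the common divisor graph Γ(X) (vertices X, edge mn iff gcd(m,n) > 1) are cycles. -/

import Mathlib

open CategoryTheory

/-- The set of irreducible complex character degrees of a group. -/
def cdSet (G : Type) [Group G] : Set ℕ :=
  {n | ∃ V : FDRep ℂ G, Simple V ∧ Module.finrank ℂ V = n}

/-- Primes dividing some element of `X`. -/
def rhoSet (X : Set ℕ) : Set ℕ := {p | p.Prime ∧ ∃ m ∈ X, p ∣ m}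

/-- The bipartite divisor graph of a set `X` of integers, on `ℕ ⊕ ℕ`
(left: primes, right: elements of `X`). -/
def bdg (X : Set ℕ) : SimpleGraph (ℕ ⊕ ℕ) where
  Adj v w :=
    (∃ p m, v = Sum.inl p ∧ w = Sum.inr m ∧ p.Prime ∧ m ∈ X ∧ p ∣ m) ∨
    (∃ p m, w = Sum.inl p ∧ v = Sum.inr m ∧ p.Prime ∧ m ∈ X ∧ p ∣ m)
  symm := ⟨fun v w h => h.symm⟩
  loopless := ⟨by rintro v (⟨p, m, h1, h2, _⟩ | ⟨p, m, h1, h2, _⟩) <;> subst h1 <;> simp_all⟩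

/-- The vertex set of the bipartite divisor graph. -/
def bdgVerts (X : Set ℕ) : Set (ℕ ⊕ ℕ) :=
  {v | Sum.elim (· ∈ rhoSet X) (· ∈ X) v}

/-- The bipartite divisor graph induced on its genuine vertex set. -/
def bdgGraph (X : Set ℕ) : SimpleGraph (bdgVerts X) :=
  (bdg X).induce (bdgVerts X)

/-- The bipartite divisor graph `B(G)` of the character degrees of `G`. -/
def BG (G : Type) [Group G] : SimpleGraph (bdgVerts (cdSet G \ {1})) :=
  bdgGraph (cdSet G \ {1})

/-- `Is a cycle of length n`. -/
def IsCycleOfLen {V : Type*} (Γ : SimpleGraph V) (n : ℕ) : Prop :=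
  Nonempty (Γ ≃g SimpleGraph.cycleGraph n)

/-- `Is a path of length n` (a path with `n` edges has `n+1` vertices). -/
def IsPathOfLen {V : Type*} (Γ : SimpleGraph V) (n : ℕ) : Prop :=
  Nonempty (Γ ≃g SimpleGraph.pathGraph (n + 1))

/-- The prime graph `Δ(X)`. -/
def deltaG (X : Set ℕ) : SimpleGraph (rhoSet X) :=
  SimpleGraph.induce (rhoSet X)
    { Adj := fun p q => p ≠ q ∧ p.Prime ∧ q.Prime ∧ ∃ m ∈ X, p ∣ m ∧ q ∣ m
      symm := ⟨fun p q h => ⟨h.1.symm, h.2.2.1, h.2.1, by tauto⟩⟩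
      loopless := ⟨fun p h => h.1 rfl⟩ }

/-- The common divisor graph `Γ(X)`. -/
def gammaG (X : Set ℕ) : SimpleGraph X :=
  SimpleGraph.induce X
    { Adj := fun m n => m ≠ n ∧ m ∈ X ∧ n ∈ X ∧ Nat.gcd m n ≠ 1
      symm := ⟨fun m n h => ⟨h.1.symm, h.2.2.1, h.2.1, by rw [Nat.gcd_comm]; exact h.2.2.2⟩⟩
      loopless := ⟨fun m h => h.1 rfl⟩ }

/-!
Since `B(X)` is bipartite, primes and elements of `X` alternate around the `n`-cycle, so `n = 2k`
and the primes occupy the positions of one parity, the elements of `X` those of the other. Two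
primes are adjacent in `Δ(X)`, and two elements in `Γ(X)`, exactly when they have a common
neighbour in `B(X)`, i.e. when their positions are two steps apart on the `2k`-cycle; on either
parity class this relation is the `k`-cycle.
-/

open SimpleGraph

theorem cycleGraph_adj_iff_val {n : ℕ} {u v : Fin n} :
    (cycleGraph n).Adj u v ↔
      u.val + 1 = v.val ∨ v.val + 1 = u.val ∨
        (u.val = 0 ∧ v.val + 1 = n ∧ 2 ≤ n) ∨ (v.val = 0 ∧ u.val + 1 = n ∧ 2 ≤ n) := by
  have hu := u.isLt
  have hv := v.isLt
  rw [cycleGraph_adj']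
  rcases lt_trichotomy u v with h | rfl | h
  · rw [Fin.coe_sub_iff_lt.2 h, Fin.coe_sub_iff_le.2 h.le, Fin.lt_def] at *
    omega
  · rw [Fin.coe_sub_iff_le.2 le_rfl]
    omega
  · rw [Fin.coe_sub_iff_le.2 h.le, Fin.coe_sub_iff_lt.2 h]
    rw [Fin.lt_def] at h
    omega

theorem even_and_exists_parity_of_alternating {n : ℕ} (hn : 2 ≤ n) (c : Fin n → Prop)
    (hc : ∀ i j, (cycleGraph n).Adj i j → (c i ↔ ¬ c j)) :
    n % 2 = 0 ∧ ∃ r < 2, ∀ i, c i ↔ i.val % 2 = r := by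
  have hpar : ∀ m (hm : m < n), c ⟨m, hm⟩ ↔ (c ⟨0, by omega⟩ ↔ m % 2 = 0) := by
    intro m
    induction m with
    | zero => simp
    | succ m ih =>
      intro hm
      have hstep := hc ⟨m, by omega⟩ ⟨m + 1, hm⟩ (cycleGraph_adj_iff_val.2 (Or.inl rfl))
      have hprev := ih (by omega)
      have hflip : (m + 1) % 2 = 0 ↔ ¬ m % 2 = 0 := by omega
      tauto
  refine ⟨?_, ?_⟩
  · -- if `n` were odd, the closing edge between `n - 1` and `0` would join equal colours
    have hclose := hc ⟨n - 1, by omega⟩ ⟨0, by omega⟩ (cycleGraph_adj_iff_val.2 (by dsimp only; omega))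
    have hlast := hpar (n - 1) (by omega)
    by_contra hodd
    have hlast_even : (n - 1) % 2 = 0 := by omega
    tauto
  · by_cases h0 : c ⟨0, by omega⟩
    · exact ⟨0, by omega, fun i => by simpa [h0] using hpar i i.isLt⟩
    · exact ⟨1, by omega, fun i => by simpa [h0] using hpar i i.isLt⟩

def twoMulAdd {k r : ℕ} (hr : r < 2) (i : Fin k) : Fin (2 * k) := ⟨2 * i + r, by omega⟩

theorem twoMulAdd_injective {k r : ℕ} (hr : r < 2) : Function.Injective (twoMulAdd (k := k) hr) :=
  fun i j h => Fin.ext (by simpa [twoMulAdd] using h)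

theorem cycleGraph_adj_iff_exists_adj_adj_twoMulAdd {k r : ℕ} (hr : r < 2) (i j : Fin k) :
    (cycleGraph k).Adj i j ↔ i ≠ j ∧
      ∃ c, (cycleGraph (2 * k)).Adj (twoMulAdd hr i) c ∧
        (cycleGraph (2 * k)).Adj c (twoMulAdd hr j) := by
  have hi := i.isLt
  have hj := j.isLt
  simp only [cycleGraph_adj_iff_val, twoMulAdd, ne_eq, Fin.ext_iff]
  constructor
  · have hwrap : r = 0 ∨ r = 1 := by omega
    rintro (h | h | h | h)
    · exact ⟨by omega, ⟨2 * i + r + 1, by omega⟩, by dsimp only; omega⟩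
    · exact ⟨by omega, ⟨2 * j + r + 1, by omega⟩, by dsimp only; omega⟩
    · rcases hwrap with rfl | rfl
      · exact ⟨by omega, ⟨2 * j + 1, by omega⟩, by dsimp only; omega⟩
      · exact ⟨by omega, ⟨0, by omega⟩, by dsimp only; omega⟩
    · rcases hwrap with rfl | rfl
      · exact ⟨by omega, ⟨2 * i + 1, by omega⟩, by dsimp only; omega⟩
      · exact ⟨by omega, ⟨0, by omega⟩, by dsimp only; omega⟩
  · rintro ⟨hij, c, h1, h2⟩
    have := c.isLt
    omega

theorem nonempty_iso_cycleGraph_of_adj_iff {V A : Type*} {G : SimpleGraph V} {H : SimpleGraph A}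
    {k r : ℕ} (hr : r < 2) (ψ : cycleGraph (2 * k) ≃g G) (ι : A → V) (hι : Function.Injective ι)
    (hrange : ∀ p, ψ p ∈ Set.range ι ↔ p.val % 2 = r)
    (hadj : ∀ a b, H.Adj a b ↔ a ≠ b ∧ ∃ v, G.Adj (ι a) v ∧ G.Adj v (ι b)) :
    Nonempty (H ≃g cycleGraph k) := by
  choose f hf using fun i => (hrange (twoMulAdd hr i)).2 (by dsimp only [twoMulAdd]; omega)
  have hinj : Function.Injective f := fun i j h =>
    twoMulAdd_injective hr (ψ.injective (by rw [← hf, ← hf, h]))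
  have hsurj : Function.Surjective f := by
    intro a
    obtain ⟨p, hpa⟩ := ψ.surjective (ι a)
    have hp := (hrange p).1 ⟨a, hpa.symm⟩
    refine ⟨⟨p.val / 2, by omega⟩, hι ?_⟩
    rw [hf, ← hpa]
    congr 1
    ext
    simp only [twoMulAdd]
    omega
  have hadj' : ∀ i j, H.Adj (f i) (f j) ↔ (cycleGraph k).Adj i j := by
    intro i j
    rw [hadj, hinj.ne_iff, cycleGraph_adj_iff_exists_adj_adj_twoMulAdd hr, hf, hf,
      ψ.surjective.exists]
    simp only [ψ.map_adj_iff]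
  exact ⟨(RelIso.mk (Equiv.ofBijective f ⟨hinj, hsurj⟩) (hadj' _ _)).symm⟩

section BipartiteDivisorGraph

variable {X : Set ℕ}

@[simp]
theorem bdg_adj_inl_inr {p m : ℕ} : (bdg X).Adj (.inl p) (.inr m) ↔ p.Prime ∧ m ∈ X ∧ p ∣ m := by
  simp [bdg]

@[simp]
theorem bdg_adj_inr_inl {p m : ℕ} : (bdg X).Adj (.inr m) (.inl p) ↔ p.Prime ∧ m ∈ X ∧ p ∣ m := by
  rw [adj_comm, bdg_adj_inl_inr]

@[simp]
theorem bdg_not_adj_inl_inl {p q : ℕ} : ¬ (bdg X).Adj (.inl p) (.inl q) := by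
  simp [bdg]

@[simp]
theorem bdg_not_adj_inr_inr {m m' : ℕ} : ¬ (bdg X).Adj (.inr m) (.inr m') := by
  simp [bdg]

theorem bdg_adj_isLeft_iff {v w : ℕ ⊕ ℕ} (h : (bdg X).Adj v w) : v.isLeft ↔ ¬ w.isLeft := by
  rcases v with v | v <;> rcases w with w | w <;> simp_all

variable (X) in
def bdgPrime (p : rhoSet X) : bdgVerts X := ⟨.inl p, p.2⟩

variable (X) in
def bdgElem (m : X) : bdgVerts X := ⟨.inr m, m.2⟩

theorem bdgPrime_injective : Function.Injective (bdgPrime X) :=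
  fun p q h => Subtype.ext (by simpa [bdgPrime, Subtype.ext_iff] using h)

theorem bdgElem_injective : Function.Injective (bdgElem X) :=
  fun m m' h => Subtype.ext (by simpa [bdgElem, Subtype.ext_iff] using h)

theorem mem_range_bdgPrime_iff {v : bdgVerts X} : v ∈ Set.range (bdgPrime X) ↔ v.1.isLeft := by
  rcases v with ⟨p | m, hv⟩
  · exact iff_of_true ⟨⟨p, hv⟩, rfl⟩ rfl
  · simp [bdgPrime, Subtype.ext_iff]

theorem mem_range_bdgElem_iff {v : bdgVerts X} : v ∈ Set.range (bdgElem X) ↔ ¬ v.1.isLeft := by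
  rcases v with ⟨p | m, hv⟩
  · simp [bdgElem, Subtype.ext_iff]
  · exact iff_of_true ⟨⟨m, hv⟩, rfl⟩ (by simp)

theorem deltaG_adj_iff {p q : rhoSet X} : (deltaG X).Adj p q ↔
    p ≠ q ∧ ∃ v, (bdgGraph X).Adj (bdgPrime X p) v ∧ (bdgGraph X).Adj v (bdgPrime X q) := by
  simp only [deltaG, comap_adj, Function.Embedding.subtype_apply]
  constructor
  · rintro ⟨hne, hp, hq, m, hm, hpm, hqm⟩
    exact ⟨fun h => hne (congrArg Subtype.val h), bdgElem X ⟨m, hm⟩,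
      by simp [bdgGraph, bdgPrime, bdgElem, *]⟩
  · rintro ⟨hne, ⟨p' | m, hv⟩, h₁, h₂⟩
    · simp [bdgGraph, bdgPrime] at h₁
    · simp only [bdgGraph, bdgPrime, comap_adj, Function.Embedding.subtype_apply,
        bdg_adj_inl_inr, bdg_adj_inr_inl] at h₁ h₂
      exact ⟨Subtype.coe_ne_coe.2 hne, h₁.1, h₂.1, m, h₁.2.1, h₁.2.2, h₂.2.2⟩

theorem gammaG_adj_iff {m m' : X} : (gammaG X).Adj m m' ↔
    m ≠ m' ∧ ∃ v, (bdgGraph X).Adj (bdgElem X m) v ∧ (bdgGraph X).Adj v (bdgElem X m') := by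
  simp only [gammaG, comap_adj, Function.Embedding.subtype_apply]
  constructor
  · rintro ⟨hne, hm, hm', hgcd⟩
    obtain ⟨p, hp, hpm, hpm'⟩ := Nat.Prime.not_coprime_iff_dvd.1 hgcd
    exact ⟨fun h => hne (congrArg Subtype.val h), bdgPrime X ⟨p, hp, m, hm, hpm⟩,
      by simp [bdgGraph, bdgPrime, bdgElem, *]⟩
  · rintro ⟨hne, ⟨p | m'', hv⟩, h₁, h₂⟩
    · simp only [bdgGraph, bdgElem, comap_adj, Function.Embedding.subtype_apply,
        bdg_adj_inl_inr, bdg_adj_inr_inl] at h₁ h₂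
      exact ⟨Subtype.coe_ne_coe.2 hne, h₁.2.1, h₂.2.1,
        Nat.Prime.not_coprime_iff_dvd.2 ⟨p, h₁.1, h₁.2.2, h₂.2.2⟩⟩
    · simp [bdgGraph, bdgElem] at h₁

end BipartiteDivisorGraph

theorem stmt2_general (X : Set ℕ) (n : ℕ) (hn : 6 ≤ n)
    (h : IsCycleOfLen (bdgGraph X) n) :
    (∃ k, IsCycleOfLen (deltaG X) k) ∧ (∃ k, IsCycleOfLen (gammaG X) k) := by
  obtain ⟨φ⟩ := h
  obtain ⟨heven, r, hr, hside⟩ := even_and_exists_parity_of_alternating (by omega)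
    (fun i => (φ.symm i).1.isLeft) fun i j hij => bdg_adj_isLeft_iff (φ.symm.map_adj_iff.2 hij)
  obtain ⟨k, rfl⟩ : ∃ k, n = 2 * k := ⟨n / 2, by omega⟩
  refine ⟨⟨k, nonempty_iso_cycleGraph_of_adj_iff hr φ.symm (bdgPrime X) bdgPrime_injective
      (fun p => mem_range_bdgPrime_iff.trans (hside p)) fun _ _ => deltaG_adj_iff⟩,
    ⟨k, nonempty_iso_cycleGraph_of_adj_iff (r := 1 - r) (by omega) φ.symm (bdgElem X)
      bdgElem_injective (fun p => mem_range_bdgElem_iff.trans ?_) fun _ _ => gammaG_adj_iff⟩⟩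
  rw [hside]
  omega

/-- If `B(X)` is a cycle of length at least 6 then both `Δ(X)` and `Γ(X)` are cycles. -/
theorem stmt2 (X : Set ℕ) (hfin : X.Finite) (hgt : ∀ x ∈ X, 1 < x) (n : ℕ) (hn : 6 ≤ n)
    (h : IsCycleOfLen (bdgGraph X) n) :
    (∃ k, IsCycleOfLen (deltaG X) k) ∧ (∃ k, IsCycleOfLen (gammaG X) k) :=
  stmt2_general X n hn h
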